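/- arXiv:2305.09096 — 4 statements merged into one kernel-verified Lean document; each statement's English description precedes it below -/
import Mathlib

section
/- Let ℓ ∈ ℝ[x_1,...,x_n] be irreducible and non-constant, and let s ≥ 1. If f and all first-order partial derivatives ∂f/∂x_1, ..., ∂f/∂x_n lie in the ideal ⟨ℓ^s⟩, then f ∈ ⟨ℓ^{s+1}⟩. -/
open MvPolynomial

private lemma coeff_pderiv' {n : ℕ} (i : Fin n) (p : MvPolynomial (Fin n) ℝ)
    (m : Fin n →₀ ℕ) :
    coeff m (pderiv i p) = (m i + 1 : ℝ) * coeff (m + Finsupp.single i 1) p := by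
  induction p using MvPolynomial.induction_on' with
  | add p q hp hq => simp [hp, hq, mul_add]
  | monomial u a =>
    rw [pderiv_monomial, coeff_monomial, coeff_monomial]
    by_cases h : u = m + Finsupp.single i 1
    · subst h
      have h1 : m + Finsupp.single i 1 - Finsupp.single i 1 = m := by
        ext j; simp [Finsupp.tsub_apply]
      have h2 : ((m + Finsupp.single i 1 : Fin n →₀ ℕ)) i = m i + 1 := by
        rw [Finsupp.add_apply, Finsupp.single_eq_same]
      rw [if_pos h1, if_pos rfl, h2]
      push_cast
      ring
    · rw [if_neg h]
      by_cases hu : u i = 0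
      · simp [hu]
      · have : u - Finsupp.single i 1 ≠ m := by
          intro he
          apply h
          rw [← he]
          ext j
          by_cases hj : j = i
          · subst hj; simp [Finsupp.tsub_apply]; omega
          · simp [Finsupp.tsub_apply, Finsupp.single_apply, hj, Ne.symm hj]
        simp [this]

private lemma totalDegree_pderiv_lt {n : ℕ} (i : Fin n) (p : MvPolynomial (Fin n) ℝ)
    (hp : 0 < p.totalDegree) : (pderiv i p).totalDegree < p.totalDegree := by
  rw [MvPolynomial.totalDegree, Finset.sup_lt_iff (by simpa using hp)]
  intro m hm
  rw [MvPolynomial.mem_support_iff, coeff_pderiv'] at hm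
  have h2 : coeff (m + Finsupp.single i 1) p ≠ 0 := by
    intro h; apply hm; rw [h, mul_zero]
  have := MvPolynomial.le_totalDegree (MvPolynomial.mem_support_iff.mpr h2)
  have hsum : ((m + Finsupp.single i 1).sum fun _ e => e) = (m.sum fun _ e => e) + 1 := by
    rw [Finsupp.sum_add_index (by simp) (by simp)]
    simp [Finsupp.sum_single_index]
  omega

private lemma exists_pderiv_ne_zero {n : ℕ} (p : MvPolynomial (Fin n) ℝ)
    (hp : 0 < p.totalDegree) : ∃ i, pderiv i p ≠ 0 := by
  have hne : p ≠ 0 := by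
    intro h; rw [h] at hp; simp at hp
  obtain ⟨d, hd, hsum⟩ := Finset.exists_mem_eq_sup p.support
    (MvPolynomial.support_nonempty.mpr hne) fun m : Fin n →₀ ℕ => m.sum fun _ e => e
  have hdsum : 0 < d.sum fun _ e => e := by rw [← hsum]; exact hp
  have : ∃ i, 0 < d i := by
    by_contra h
    push_neg at h
    have hd0 : d = 0 := Finsupp.ext fun i => Nat.le_zero.mp (h i)
    rw [hd0] at hdsum
    simp at hdsum
  obtain ⟨i, hi⟩ := this
  refine ⟨i, fun h0 => ?_⟩
  have := coeff_pderiv' i p (d - Finsupp.single i 1)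
  rw [h0] at this
  have hrec : d - Finsupp.single i 1 + Finsupp.single i 1 = d := by
    ext j
    by_cases hj : j = i
    · subst hj; simp [Finsupp.tsub_apply]; omega
    · simp [Finsupp.tsub_apply, Finsupp.single_apply, hj, Ne.symm hj]
  rw [hrec] at this
  have hd0 : coeff d p ≠ 0 := MvPolynomial.mem_support_iff.mp hd
  simp only [MvPolynomial.coeff_zero] at this
  have hcd : (((d - Finsupp.single i 1 : Fin n →₀ ℕ) i : ℝ) + 1) * coeff d p = 0 :=
    this.symm
  have h1 : (((d - Finsupp.single i 1 : Fin n →₀ ℕ) i : ℝ) + 1) ≠ 0 :=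
    Nat.cast_add_one_ne_zero _
  exact hd0 ((mul_eq_zero.mp hcd).resolve_left h1)

private lemma totalDegree_le_of_dvd {n : ℕ} {p q : MvPolynomial (Fin n) ℝ}
    (hq : q ≠ 0) (h : p ∣ q) : p.totalDegree ≤ q.totalDegree := by
  obtain ⟨c, rfl⟩ := h
  have hp : p ≠ 0 := fun h => by simp [h] at hq
  have hc : c ≠ 0 := fun h => by simp [h] at hq
  set a := p.totalDegree
  set b := c.totalDegree
  have key : homogeneousComponent (a + b) (p * c) =
      homogeneousComponent a p * homogeneousComponent b c := by
    conv_lhs => rw [← sum_homogeneousComponent p, ← sum_homogeneousComponent c,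
      Finset.sum_mul_sum]
    simp only [map_sum]
    have hterm : ∀ x y : ℕ, x ≤ a → y ≤ b → x + y ≠ a + b →
        homogeneousComponent (a + b) (homogeneousComponent x p * homogeneousComponent y c)
          = 0 := by
      intro x y hx hy hne
      rw [homogeneousComponent_of_mem
        ((homogeneousComponent_isHomogeneous x p).mul
          (homogeneousComponent_isHomogeneous y c)), if_neg (fun h => hne h.symm)]
    rw [Finset.sum_eq_single a]
    · rw [Finset.sum_eq_single b]
      · rw [homogeneousComponent_of_mem
          ((homogeneousComponent_isHomogeneous a p).mul
            (homogeneousComponent_isHomogeneous b c)), if_pos rfl]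
      · intro y hy hyb
        exact hterm a y le_rfl (by simpa using Nat.lt_succ_iff.mp (Finset.mem_range.mp hy))
          (by omega)
      · intro h
        exact absurd (Finset.self_mem_range_succ b) h
    · intro x hx hxa
      apply Finset.sum_eq_zero
      intro y hy
      have hx' : x ≤ a := Nat.lt_succ_iff.mp (Finset.mem_range.mp hx)
      have hy' : y ≤ b := Nat.lt_succ_iff.mp (Finset.mem_range.mp hy)
      exact hterm x y hx' hy' (by omega)
    · intro h
      exact absurd (Finset.self_mem_range_succ a) h
  have hpa : homogeneousComponent a p ≠ 0 := by
    obtain ⟨d, hd, hsum⟩ := Finset.exists_mem_eq_sup p.support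
      (MvPolynomial.support_nonempty.mpr hp) fun m : Fin n →₀ ℕ => m.sum fun _ e => e
    intro h0
    have := coeff_homogeneousComponent (n := a) (φ := p) d
    rw [h0, if_pos (by show Finsupp.degree d = p.totalDegree; exact hsum.symm)] at this
    exact MvPolynomial.mem_support_iff.mp hd this.symm
  have hcb : homogeneousComponent b c ≠ 0 := by
    obtain ⟨d, hd, hsum⟩ := Finset.exists_mem_eq_sup c.support
      (MvPolynomial.support_nonempty.mpr hc) fun m : Fin n →₀ ℕ => m.sum fun _ e => e
    intro h0
    have := coeff_homogeneousComponent (n := b) (φ := c) d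
    rw [h0, if_pos (by show Finsupp.degree d = c.totalDegree; exact hsum.symm)] at this
    exact MvPolynomial.mem_support_iff.mp hd this.symm
  have hne : homogeneousComponent (a + b) (p * c) ≠ 0 := by
    rw [key]; exact mul_ne_zero hpa hcb
  by_contra hlt
  push_neg at hlt
  exact hne (homogeneousComponent_eq_zero _ _ (lt_of_lt_of_le hlt (Nat.le_add_right a b)))

/-- Let `ℓ ∈ ℝ[x₁,…,x_n]` be irreducible and non-constant, and `s ≥ 1`.
If `f` and all its first-order partial derivatives lie in `⟨ℓ^s⟩`, then `f ∈ ⟨ℓ^{s+1}⟩`. -/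
theorem stmt2 {n : ℕ} (ℓ f : MvPolynomial (Fin n) ℝ)
    (hirr : Irreducible ℓ) (hnonconst : 0 < ℓ.totalDegree)
    (s : ℕ) (hs : 1 ≤ s)
    (hf : f ∈ Ideal.span {ℓ ^ s})
    (hdf : ∀ i : Fin n, MvPolynomial.pderiv i f ∈ Ideal.span {ℓ ^ s}) :
    f ∈ Ideal.span {ℓ ^ (s + 1)} := by
  rw [Ideal.mem_span_singleton] at hf ⊢
  obtain ⟨g, rfl⟩ := hf
  obtain ⟨i, hi⟩ := exists_pderiv_ne_zero ℓ hnonconst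
  have hl0 : ℓ ≠ 0 := hirr.ne_zero
  have hprime : Prime ℓ := hirr.prime
  -- compute the derivative
  have hderiv : pderiv i (ℓ ^ s * g) =
      (s : MvPolynomial (Fin n) ℝ) * ℓ ^ (s - 1) * pderiv i ℓ * g + ℓ ^ s * pderiv i g := by
    rw [pderiv_mul, pderiv_pow]
  have hd := hdf i
  rw [Ideal.mem_span_singleton, hderiv] at hd
  have hdvd1 : ℓ ^ s ∣ (s : MvPolynomial (Fin n) ℝ) * ℓ ^ (s - 1) * pderiv i ℓ * g := by
    have h2 : ℓ ^ s ∣ ℓ ^ s * pderiv i g := Dvd.intro _ rfl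
    exact (dvd_add_right h2).mp (by rwa [add_comm] at hd)
  have hspow : ℓ ^ s = ℓ ^ (s - 1) * ℓ := by
    rw [← pow_succ]; congr 1; omega
  have hdvd2 : ℓ ∣ (s : MvPolynomial (Fin n) ℝ) * pderiv i ℓ * g := by
    rw [hspow] at hdvd1
    have h1 : ℓ ^ (s - 1) * ℓ ∣ ℓ ^ (s - 1) * ((s : MvPolynomial (Fin n) ℝ) *
        pderiv i ℓ * g) := by
      convert hdvd1 using 1; ring
    exact (mul_dvd_mul_iff_left (pow_ne_zero _ hl0)).mp h1
  -- ℓ does not divide the constant s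
  have hsc : ¬ ℓ ∣ (s : MvPolynomial (Fin n) ℝ) := by
    intro h
    have hcast : (s : MvPolynomial (Fin n) ℝ) = MvPolynomial.C (s : ℝ) :=
      (map_natCast (MvPolynomial.C : ℝ →+* MvPolynomial (Fin n) ℝ) s).symm
    have hs0 : (s : MvPolynomial (Fin n) ℝ) ≠ 0 := by
      rw [hcast]
      exact MvPolynomial.C_ne_zero.mpr (Nat.cast_ne_zero.mpr (by omega))
    have h1 := totalDegree_le_of_dvd hs0 h
    have h2 : (s : MvPolynomial (Fin n) ℝ).totalDegree = 0 := by
      rw [hcast, MvPolynomial.totalDegree_C]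
    omega
  -- ℓ does not divide its own derivative
  have hsd : ¬ ℓ ∣ pderiv i ℓ := by
    intro h
    have := totalDegree_le_of_dvd hi h
    have := totalDegree_pderiv_lt i ℓ hnonconst
    omega
  have hg : ℓ ∣ g := by
    rcases hprime.dvd_mul.mp hdvd2 with h | h
    · rcases hprime.dvd_mul.mp h with h' | h'
      · exact absurd h' hsc
      · exact absurd h' hsd
    · exact h
  obtain ⟨g', rfl⟩ := hg
  exact ⟨g', by ring⟩
end

section
/- Let (Δ, Φ) be a G^r-domain with Δ an n-dimensional polyhedral complex. A tuple (f_σ)_{σ ∈ Δ_n} is a G^r-spline (i.e., for each pair of adjacent n-faces σ_i, σ_j sharing an (n−1)-face τ, φ_{ij}(f̄_{σ_i}) = f̄_{σ_j} in the quotient rings) if and only if for each interior (n−1)-face τ = σ_i ∩ σ_j, the difference f_{σ_i} − f_{σ_j} lies in the ideal I^r(τ) = ⟨u_{ik} − φ̃_{ij}(u_{ik}) : k = 1,...,n⟩ + I_{σ_i}(τ)^{r+1}·R(τ) + I_{σ_j}(τ)^{r+1}·R(τ) of the tensor product ring R(τ) = R(σ_i) ⊗ R(σ_j). -/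
open MvPolynomial

/-- On a `G^r`-domain, a tuple `(f_σ)` of polynomials (one per `n`-face)
satisfies the `G^r`-continuity condition `φ_{ij}(f̄_{σ_i}) = f̄_{σ_j}` for every pair of
adjacent `n`-faces if and only if, for every such pair with common `(n−1)`-face `τ`,
`f_{σ_i} − f_{σ_j}` lies in the ideal
`I^r(τ) = ⟨u_{ik} − φ̃_{ij}(u_{ik})⟩ + I_{σ_i}(τ)^{r+1}·R(τ) + I_{σ_j}(τ)^{r+1}·R(τ)`
of the tensor product ring `R(τ) = R(σ_i) ⊗ R(σ_j)` (variables indexed by `Fin n ⊕ Fin n`).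

Here `ι` indexes the `n`-faces, `adj i j` says `σ_i, σ_j` are adjacent, `Iτ i j ⊆ R(σ_i)`
is the vanishing ideal of `τ = σ_i ∩ σ_j` in the coordinates of `σ_i`, `φt i j` is a lift
of the `G^r`-algebraic transition map `φ i j`. -/
theorem stmt6 {ι : Type} {n r : ℕ}
    (adj : ι → ι → Prop)
    (Iτ : ι → ι → Ideal (MvPolynomial (Fin n) ℝ))
    (φt : ι → ι → (MvPolynomial (Fin n) ℝ →ₐ[ℝ] MvPolynomial (Fin n) ℝ))
    (φ : ∀ i j, (MvPolynomial (Fin n) ℝ ⧸ (Iτ i j) ^ (r + 1)) →+*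
      (MvPolynomial (Fin n) ℝ ⧸ (Iτ j i) ^ (r + 1)))
    (hlift : ∀ i j, adj i j → ∀ f,
      φ i j (Ideal.Quotient.mk ((Iτ i j) ^ (r + 1)) f) =
        Ideal.Quotient.mk ((Iτ j i) ^ (r + 1)) (φt i j f))
    (f : ι → MvPolynomial (Fin n) ℝ) :
    (∀ i j, adj i j →
        φ i j (Ideal.Quotient.mk ((Iτ i j) ^ (r + 1)) (f i)) =
          Ideal.Quotient.mk ((Iτ j i) ^ (r + 1)) (f j))
    ↔ (∀ i j, adj i j →
        MvPolynomial.rename Sum.inl (f i) - MvPolynomial.rename Sum.inr (f j) ∈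
          Ideal.span {p : MvPolynomial (Fin n ⊕ Fin n) ℝ |
            ∃ k : Fin n, p = MvPolynomial.X (Sum.inl k) -
              MvPolynomial.rename Sum.inr (φt i j (MvPolynomial.X k))}
          ⊔ Ideal.map (MvPolynomial.rename (Sum.inl : Fin n → Fin n ⊕ Fin n))
              ((Iτ i j) ^ (r + 1))
          ⊔ Ideal.map (MvPolynomial.rename (Sum.inr : Fin n → Fin n ⊕ Fin n))
              ((Iτ j i) ^ (r + 1))) := by

  constructor
  · intro h i j hij
    have key : Ideal.Quotient.mk ((Iτ j i) ^ (r + 1)) (φt i j (f i)) =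
        Ideal.Quotient.mk ((Iτ j i) ^ (r + 1)) (f j) := by
      rw [← hlift i j hij]; exact h i j hij
    have hmem : φt i j (f i) - f j ∈ (Iτ j i) ^ (r + 1) := Ideal.Quotient.eq.mp key
    set S : Set (MvPolynomial (Fin n ⊕ Fin n) ℝ) :=
      {p | ∃ k : Fin n, p = MvPolynomial.X (Sum.inl k) -
        MvPolynomial.rename Sum.inr (φt i j (MvPolynomial.X k))} with hS
    have h1 : MvPolynomial.rename (Sum.inl : Fin n → Fin n ⊕ Fin n) (f i) -
        MvPolynomial.rename Sum.inr (φt i j (f i)) ∈ Ideal.span S := by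
      have hAB : (Ideal.Quotient.mkₐ ℝ (Ideal.span S)).comp
            (MvPolynomial.rename (Sum.inl : Fin n → Fin n ⊕ Fin n)) =
          (Ideal.Quotient.mkₐ ℝ (Ideal.span S)).comp
            ((MvPolynomial.rename (Sum.inr : Fin n → Fin n ⊕ Fin n)).comp (φt i j)) := by
        apply MvPolynomial.algHom_ext
        intro k
        simp only [AlgHom.comp_apply, MvPolynomial.rename_X, Ideal.Quotient.mkₐ_eq_mk]
        rw [Ideal.Quotient.eq]
        exact Ideal.subset_span ⟨k, rfl⟩
      have := congrArg (fun (g : MvPolynomial (Fin n) ℝ →ₐ[ℝ] _) => g (f i)) hAB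
      simp only [AlgHom.comp_apply, Ideal.Quotient.mkₐ_eq_mk] at this
      exact Ideal.Quotient.eq.mp this
    have h2 : MvPolynomial.rename (Sum.inr : Fin n → Fin n ⊕ Fin n) (φt i j (f i) - f j) ∈
        Ideal.map (MvPolynomial.rename (Sum.inr : Fin n → Fin n ⊕ Fin n))
          ((Iτ j i) ^ (r + 1)) := Ideal.mem_map_of_mem _ hmem
    have hdecomp : MvPolynomial.rename (Sum.inl : Fin n → Fin n ⊕ Fin n) (f i) -
        MvPolynomial.rename Sum.inr (f j) =
        (MvPolynomial.rename (Sum.inl : Fin n → Fin n ⊕ Fin n) (f i) -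
          MvPolynomial.rename Sum.inr (φt i j (f i))) +
        MvPolynomial.rename (Sum.inr : Fin n → Fin n ⊕ Fin n) (φt i j (f i) - f j) := by
      rw [map_sub]; ring
    rw [hdecomp]
    exact add_mem (Ideal.mem_sup_left (Ideal.mem_sup_left h1)) (Ideal.mem_sup_right h2)
  · intro h i j hij
    have hm := h i j hij
    set ψ : MvPolynomial (Fin n ⊕ Fin n) ℝ →ₐ[ℝ] MvPolynomial (Fin n) ℝ :=
      MvPolynomial.aeval (Sum.elim (fun k => φt i j (MvPolynomial.X k)) MvPolynomial.X)
      with hψ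
    have heq : (MvPolynomial.aeval (fun k => φt i j (MvPolynomial.X k)) :
        MvPolynomial (Fin n) ℝ →ₐ[ℝ] MvPolynomial (Fin n) ℝ) = φt i j := by
      apply MvPolynomial.algHom_ext; intro k; simp
    have hl : ∀ g, ψ (MvPolynomial.rename (Sum.inl : Fin n → Fin n ⊕ Fin n) g) =
        φt i j g := by
      intro g
      rw [hψ, MvPolynomial.aeval_rename]
      have : (Sum.elim (fun k => φt i j (MvPolynomial.X k)) MvPolynomial.X ∘ Sum.inl) =
          fun k => φt i j (MvPolynomial.X k) := rfl
      rw [this, heq]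
    have hr : ∀ g, ψ (MvPolynomial.rename (Sum.inr : Fin n → Fin n ⊕ Fin n) g) = g := by
      intro g
      rw [hψ, MvPolynomial.aeval_rename]
      have : (Sum.elim (fun k => φt i j (MvPolynomial.X k)) MvPolynomial.X ∘ Sum.inr) =
          MvPolynomial.X := rfl
      rw [this]
      exact MvPolynomial.aeval_X_left_apply g
    have hle : Ideal.span {p : MvPolynomial (Fin n ⊕ Fin n) ℝ |
          ∃ k : Fin n, p = MvPolynomial.X (Sum.inl k) -
            MvPolynomial.rename Sum.inr (φt i j (MvPolynomial.X k))}
        ⊔ Ideal.map (MvPolynomial.rename (Sum.inl : Fin n → Fin n ⊕ Fin n))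
            ((Iτ i j) ^ (r + 1))
        ⊔ Ideal.map (MvPolynomial.rename (Sum.inr : Fin n → Fin n ⊕ Fin n))
            ((Iτ j i) ^ (r + 1)) ≤
        Ideal.comap ψ.toRingHom ((Iτ j i) ^ (r + 1)) := by
      refine sup_le (sup_le ?_ ?_) ?_
      · rw [Ideal.span_le]
        rintro p ⟨k, rfl⟩
        simp only [SetLike.mem_coe, Ideal.mem_comap, AlgHom.toRingHom_eq_coe,
          RingHom.coe_coe, map_sub]
        rw [hr]
        have : ψ (MvPolynomial.X (Sum.inl k : Fin n ⊕ Fin n)) = φt i j (MvPolynomial.X k) := by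
          have := hl (MvPolynomial.X k)
          rwa [MvPolynomial.rename_X] at this
        rw [this, sub_self]
        exact Ideal.zero_mem _
      · rw [Ideal.map_le_iff_le_comap]
        intro x hx
        simp only [Ideal.mem_comap, AlgHom.toRingHom_eq_coe, RingHom.coe_coe]
        rw [hl]
        have h0 : Ideal.Quotient.mk ((Iτ j i) ^ (r + 1)) (φt i j x) = 0 := by
          rw [← hlift i j hij x, Ideal.Quotient.eq_zero_iff_mem.mpr hx, map_zero]
        exact Ideal.Quotient.eq_zero_iff_mem.mp h0
      · rw [Ideal.map_le_iff_le_comap]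
        intro x hx
        simp only [Ideal.mem_comap, AlgHom.toRingHom_eq_coe, RingHom.coe_coe]
        rw [hr]
        exact hx
    have hres : φt i j (f i) - f j ∈ (Iτ j i) ^ (r + 1) := by
      have := hle hm
      simp only [Ideal.mem_comap, AlgHom.toRingHom_eq_coe, RingHom.coe_coe, map_sub] at this
      rwa [hl, hr] at this
    rw [hlift i j hij, Ideal.Quotient.eq]
    exact hres
end

section
/- Suppose σ₁ and σ₂ are two adjacent faces with common face τ, and the G^r-algebraic transition map φ₁₂ is invertible and lifts to an invertible affine map φ̃₁₂ : R(σ₁) → R(σ₂). Then the kernel of the map ∂₂ = [1, −1] : R_d(σ₁) ⊕ R_d(σ₁) → R_d(σ₁)/(I_{σ₁}(τ)^{r+1} ∩ R_d(σ₁)) is isomorphic to the kernel of δ₂ : R_d(σ₁) ⊕ R_d(σ₂) → Q^r_d(τ); in particular the space of degree-≤d G^r-splines on the two-patch domain is isomorphic to the space of pairs (f, g) of degree-≤d polynomials on σ₁ with f − g ∈ I_{σ₁}(τ)^{r+1}. -/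
open MvPolynomial

lemma totalDegree_aeval_le' {n : ℕ} (f : Fin n → MvPolynomial (Fin n) ℝ)
    (hf : ∀ i, (f i).totalDegree ≤ 1) (p : MvPolynomial (Fin n) ℝ) :
    (aeval f p).totalDegree ≤ p.totalDegree := by
  conv_lhs => rw [p.as_sum, map_sum]
  refine (totalDegree_finset_sum _ _).trans (Finset.sup_le fun m hm => ?_)
  rw [aeval_monomial]
  refine (totalDegree_mul _ _).trans ?_
  rw [algebraMap_eq, totalDegree_C, zero_add]
  calc (m.prod fun i k => f i ^ k).totalDegree
      ≤ ∑ i ∈ m.support, (f i ^ m i).totalDegree := totalDegree_finset_prod _ _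
    _ ≤ ∑ i ∈ m.support, m i * 1 := by
        refine Finset.sum_le_sum fun i _ => (totalDegree_pow _ _).trans ?_
        exact Nat.mul_le_mul_left _ (hf i)
    _ = m.sum fun _ k => k := by simp [Finsupp.sum]
    _ ≤ p.totalDegree := le_totalDegree hm

lemma algEquiv_totalDegree_le {n : ℕ}
    (ψ : MvPolynomial (Fin n) ℝ →ₐ[ℝ] MvPolynomial (Fin n) ℝ)
    (h : ∀ i, (ψ (X i)).totalDegree ≤ 1) (p : MvPolynomial (Fin n) ℝ) :
    (ψ p).totalDegree ≤ p.totalDegree := by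
  have := aeval_unique ψ
  rw [this]
  exact totalDegree_aeval_le' _ h p

lemma symm_affine {n : ℕ}
    (φ : MvPolynomial (Fin n) ℝ ≃ₐ[ℝ] MvPolynomial (Fin n) ℝ)
    (haffine : ∀ i, (φ (X i)).totalDegree ≤ 1) (i : Fin n) :
    (φ.symm (X i)).totalDegree ≤ 1 := by
  set V := restrictTotalDegree (Fin n) ℝ 1 with hV
  have hdeg : ∀ p : MvPolynomial (Fin n) ℝ, (φ p).totalDegree ≤ p.totalDegree :=
    algEquiv_totalDegree_le φ.toAlgHom haffine
  have hrestrict : ∀ v ∈ V, φ.toLinearMap v ∈ V := by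
    intro v hv
    rw [hV, mem_restrictTotalDegree] at hv ⊢
    exact (hdeg v).trans hv
  set L : V →ₗ[ℝ] V := φ.toLinearMap.restrict hrestrict with hL
  have hinj : Function.Injective L := by
    intro a b hab
    have := congrArg (Subtype.val) hab
    simp only [hL, LinearMap.restrict_apply] at this
    exact Subtype.ext (φ.injective this)
  have hsurj : Function.Surjective L :=
    (LinearMap.injective_iff_surjective_of_finrank_eq_finrank rfl).mp hinj
  have hXmem : (X i : MvPolynomial (Fin n) ℝ) ∈ V := by
    rw [hV, mem_restrictTotalDegree, totalDegree_X]
  obtain ⟨p, hp⟩ := hsurj ⟨X i, hXmem⟩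
  have hφp : φ (p : MvPolynomial (Fin n) ℝ) = X i := by
    have := congrArg (Subtype.val) hp
    simpa [hL, LinearMap.restrict_apply] using this
  have : φ.symm (X i) = (p : MvPolynomial (Fin n) ℝ) := by
    rw [← hφp, AlgEquiv.symm_apply_apply]
  rw [this]
  exact (mem_restrictTotalDegree _ _ _).mp p.2

/-- Two adjacent faces `σ₁, σ₂` with common face `τ`, vanishing ideals
`I₁ ⊆ R(σ₁)`, `I₂ ⊆ R(σ₂)`.  Suppose the `G^r`-algebraic transition map is invertible and
lifts to an invertible affine map `φ : R(σ₁) → R(σ₂)` (each variable is sent to a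
polynomial of degree ≤ 1), with `φ(I₁) = I₂`.  Then the kernel of
`∂₂ = [1, −1] : R_d(σ₁) ⊕ R_d(σ₁) → R_d(σ₁)/(I₁^{r+1} ∩ R_d(σ₁))`, i.e. the space of
pairs `(f, g)` of degree-≤d polynomials with `f − g ∈ I₁^{r+1}`, is isomorphic to the
kernel of `δ₂ : R_d(σ₁) ⊕ R_d(σ₂) → Q^r_d(τ)`, i.e. the space of degree-≤d `G^r`-splines
on the two-patch domain. -/
theorem stmt8 {n r d : ℕ}
    (φ : MvPolynomial (Fin n) ℝ ≃ₐ[ℝ] MvPolynomial (Fin n) ℝ)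
    (haffine : ∀ i : Fin n, (φ (MvPolynomial.X i)).totalDegree ≤ 1)
    (I₁ I₂ : Ideal (MvPolynomial (Fin n) ℝ))
    (hmap : Ideal.map (φ : MvPolynomial (Fin n) ℝ →ₐ[ℝ] MvPolynomial (Fin n) ℝ) I₁ = I₂) :
    Nonempty (
      -- kernel of ∂₂ : pairs (f, g) of degree ≤ d with f − g ∈ I₁^{r+1}
      ↥((MvPolynomial.restrictTotalDegree (Fin n) ℝ d).prod
            (MvPolynomial.restrictTotalDegree (Fin n) ℝ d) ⊓
          Submodule.comap
            (LinearMap.fst ℝ (MvPolynomial (Fin n) ℝ) (MvPolynomial (Fin n) ℝ) -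
              LinearMap.snd ℝ (MvPolynomial (Fin n) ℝ) (MvPolynomial (Fin n) ℝ))
            (Submodule.restrictScalars ℝ (I₁ ^ (r + 1))))
      ≃ₗ[ℝ]
      -- kernel of δ₂ : degree-≤d G^r-splines (f, g) with
      -- rename inl f − rename inr g ∈ I^r(τ)
      ↥((MvPolynomial.restrictTotalDegree (Fin n) ℝ d).prod
            (MvPolynomial.restrictTotalDegree (Fin n) ℝ d) ⊓
          Submodule.comap
            ((MvPolynomial.rename (Sum.inl : Fin n → Fin n ⊕ Fin n)).toLinearMap ∘ₗ
                LinearMap.fst ℝ (MvPolynomial (Fin n) ℝ) (MvPolynomial (Fin n) ℝ) -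
              (MvPolynomial.rename (Sum.inr : Fin n → Fin n ⊕ Fin n)).toLinearMap ∘ₗ
                LinearMap.snd ℝ (MvPolynomial (Fin n) ℝ) (MvPolynomial (Fin n) ℝ))
            (Submodule.restrictScalars ℝ
              (Ideal.span {p : MvPolynomial (Fin n ⊕ Fin n) ℝ |
                  ∃ k : Fin n, p = MvPolynomial.X (Sum.inl k) -
                    MvPolynomial.rename Sum.inr (φ (MvPolynomial.X k))}
                ⊔ Ideal.map (MvPolynomial.rename (Sum.inl : Fin n → Fin n ⊕ Fin n))
                    (I₁ ^ (r + 1))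
                ⊔ Ideal.map (MvPolynomial.rename (Sum.inr : Fin n → Fin n ⊕ Fin n))
                    (I₂ ^ (r + 1)))))) := by
  classical
  set S : Set (MvPolynomial (Fin n ⊕ Fin n) ℝ) :=
    {p | ∃ k : Fin n, p = X (Sum.inl k) - rename Sum.inr (φ (X k))} with hS
  set J : Ideal (MvPolynomial (Fin n ⊕ Fin n) ℝ) :=
    Ideal.span S ⊔ Ideal.map (rename (Sum.inl : Fin n → Fin n ⊕ Fin n)) (I₁ ^ (r + 1))
      ⊔ Ideal.map (rename (Sum.inr : Fin n → Fin n ⊕ Fin n)) (I₂ ^ (r + 1)) with hJ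
  have hdφ : ∀ p : MvPolynomial (Fin n) ℝ, (φ p).totalDegree ≤ p.totalDegree :=
    algEquiv_totalDegree_le φ.toAlgHom haffine
  have hdφs : ∀ p : MvPolynomial (Fin n) ℝ, (φ.symm p).totalDegree ≤ p.totalDegree :=
    algEquiv_totalDegree_le φ.symm.toAlgHom (symm_affine φ haffine)
  -- the graph lemma
  have hgraph : ∀ p : MvPolynomial (Fin n) ℝ,
      rename Sum.inl p - rename Sum.inr (φ p) ∈ Ideal.span S := by
    intro p
    have key : (Ideal.Quotient.mkₐ ℝ (Ideal.span S)).comp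
        (rename (Sum.inl : Fin n → Fin n ⊕ Fin n))
        = ((Ideal.Quotient.mkₐ ℝ (Ideal.span S)).comp
            (rename (Sum.inr : Fin n → Fin n ⊕ Fin n))).comp φ.toAlgHom := by
      apply algHom_ext
      intro k
      simp only [AlgHom.comp_apply, rename_X, Ideal.Quotient.mkₐ_eq_mk, AlgEquiv.toAlgHom_eq_coe,
        AlgHom.coe_coe]
      rw [Ideal.Quotient.eq]
      exact Ideal.subset_span ⟨k, rfl⟩
    have := congrArg (fun ψ => ψ p) key
    simp only [AlgHom.comp_apply, Ideal.Quotient.mkₐ_eq_mk, AlgEquiv.toAlgHom_eq_coe,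
      AlgHom.coe_coe] at this
    exact (Ideal.Quotient.eq).mp this
  -- the evaluation map Θ
  set Θ : MvPolynomial (Fin n ⊕ Fin n) ℝ →ₐ[ℝ] MvPolynomial (Fin n) ℝ :=
    aeval (Sum.elim X fun k => φ.symm (X k)) with hΘ
  have hΘl : ∀ p : MvPolynomial (Fin n) ℝ, Θ (rename Sum.inl p) = p := by
    intro p
    rw [hΘ, aeval_rename]
    simp [Function.comp_def]
  have hΘr : ∀ q : MvPolynomial (Fin n) ℝ, Θ (rename Sum.inr q) = φ.symm q := by
    intro q
    rw [hΘ, aeval_rename]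
    have : (φ.symm : MvPolynomial (Fin n) ℝ →ₐ[ℝ] MvPolynomial (Fin n) ℝ)
        = aeval ((φ.symm : MvPolynomial (Fin n) ℝ →ₐ[ℝ] MvPolynomial (Fin n) ℝ) ∘ X) :=
      aeval_unique _
    conv_rhs => rw [show φ.symm q
      = (φ.symm : MvPolynomial (Fin n) ℝ →ₐ[ℝ] MvPolynomial (Fin n) ℝ) q from rfl, this]
    congr 1
  have hsymmI : ∀ x ∈ I₂ ^ (r + 1), φ.symm x ∈ I₁ ^ (r + 1) := by
    have h2 : I₂ ^ (r + 1) = Ideal.map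
        (φ : MvPolynomial (Fin n) ℝ →ₐ[ℝ] MvPolynomial (Fin n) ℝ) (I₁ ^ (r + 1)) := by
      rw [← hmap, Ideal.map_pow]
    have hle : Ideal.map (φ : MvPolynomial (Fin n) ℝ →ₐ[ℝ] MvPolynomial (Fin n) ℝ)
        (I₁ ^ (r + 1)) ≤ Ideal.comap
          (φ.symm : MvPolynomial (Fin n) ℝ →ₐ[ℝ] MvPolynomial (Fin n) ℝ) (I₁ ^ (r + 1)) := by
      rw [Ideal.map_le_iff_le_comap]
      intro y hy
      simpa [Ideal.mem_comap] using hy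
    intro x hx
    rw [h2] at hx
    exact hle hx
  have hJle : J ≤ Ideal.comap Θ (I₁ ^ (r + 1)) := by
    rw [hJ]
    refine sup_le (sup_le ?_ ?_) ?_
    · rw [Ideal.span_le]
      rintro _ ⟨k, rfl⟩
      simp only [SetLike.mem_coe, Ideal.mem_comap, map_sub, hΘr, hΘ, aeval_X, Sum.elim_inl]
      rw [← hΘ, hΘr]
      simp [AlgEquiv.symm_apply_apply]
    · rw [Ideal.map_le_iff_le_comap]
      intro x hx
      simpa [Ideal.mem_comap, hΘl] using hx
    · rw [Ideal.map_le_iff_le_comap]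
      intro x hx
      simp only [Ideal.mem_comap, hΘr]
      exact hsymmI x hx
  -- the linear equivalence on the ambient product
  set E : (MvPolynomial (Fin n) ℝ × MvPolynomial (Fin n) ℝ) ≃ₗ[ℝ]
      (MvPolynomial (Fin n) ℝ × MvPolynomial (Fin n) ℝ) :=
    (LinearEquiv.refl ℝ _).prodCongr φ.toLinearEquiv with hE
  refine ⟨LinearEquiv.ofSubmodules E _ _ ?_⟩
  rw [Submodule.map_equiv_eq_comap_symm]
  ext x
  obtain ⟨f, g⟩ := x
  have hEsymm : E.symm (f, g) = (f, φ.symm g) := by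
    simp [hE, LinearEquiv.prodCongr_symm, LinearEquiv.prodCongr_apply]
  simp only [Submodule.mem_comap, hEsymm, Submodule.mem_inf, Submodule.mem_prod,
    LinearMap.sub_apply, LinearMap.fst_apply, LinearMap.snd_apply, LinearMap.comp_apply,
    AlgHom.toLinearMap_apply, Submodule.restrictScalars_mem, mem_restrictTotalDegree]
  constructor
  · rintro ⟨⟨h1, h2⟩, h3⟩
    refine ⟨⟨h1, ?_⟩, ?_⟩
    · have : g = φ (φ.symm g) := (φ.apply_symm_apply g).symm
      rw [this]
      exact (hdφ _).trans h2
    · have heq : rename Sum.inl f - rename Sum.inr g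
          = rename Sum.inl (f - φ.symm g)
            + (rename Sum.inl (φ.symm g) - rename Sum.inr (φ (φ.symm g))) := by
        rw [φ.apply_symm_apply, map_sub]
        ring
      rw [heq]
      refine Submodule.add_mem _ ?_ ?_
      · refine Submodule.mem_sup_left (Submodule.mem_sup_right ?_)
        exact Ideal.mem_map_of_mem _ h3
      · exact Submodule.mem_sup_left (Submodule.mem_sup_left (hgraph _))
  · rintro ⟨⟨h1, h2⟩, h3⟩
    refine ⟨⟨h1, (hdφs g).trans h2⟩, ?_⟩
    have := hJle h3
    rw [Ideal.mem_comap, map_sub, hΘl, hΘr] at this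
    exact this
end

section
/- Let τ be the common edge of two quadrilateral patches σ₁, σ₂ with coordinate rings ℝ[u₁,v₁] and ℝ[u₂,v₂], vanishing ideals ⟨u₁⟩ and ⟨v₂⟩, and let the G¹-transition ideal be I¹(τ) = ⟨u₁ + v₂, v₁ − u₂ − v₂·a(u₂), u₁², v₂²⟩ in ℝ[u₁,v₁,u₂,v₂], where a is a univariate polynomial of degree d_a ≥ 1. For total degree d ≥ d_a + 1, the space T_d(τ) of sums f₁(u₁,v₁) + f₂(u₂,v₂) with deg f_i ≤ d satisfies dim T_d(τ)/(T_d(τ) ∩ I¹(τ)) = 2d + d_a + 1, and dim (T_d(τ) ∩ I¹(τ)) = d² + d − d_a. -/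
open MvPolynomial

/-- The transition ideal
`I¹(τ) = ⟨u₁ + v₂, v₁ − u₂ − v₂·a(u₂), u₁², v₂²⟩ ⊆ ℝ[u₁,v₁,u₂,v₂]`,
with variables `u₁ = X 0, v₁ = X 1, u₂ = X 2, v₂ = X 3`. -/
noncomputable def transIdeal (a : Polynomial ℝ) : Ideal (MvPolynomial (Fin 4) ℝ) :=
  Ideal.span {X 0 + X 3,
    X 1 - X 2 - X 3 * Polynomial.aeval (X 2 : MvPolynomial (Fin 4) ℝ) a,
    (X 0 : MvPolynomial (Fin 4) ℝ) ^ 2, (X 3 : MvPolynomial (Fin 4) ℝ) ^ 2}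

/-- `T_d(τ) = R_d(σ₁) + R_d(σ₂)`: sums `f₁(u₁,v₁) + f₂(u₂,v₂)` with each `f_i` of total
degree ≤ d, inside `ℝ[u₁,v₁,u₂,v₂]`. -/
noncomputable def Ttot (d : ℕ) : Submodule ℝ (MvPolynomial (Fin 4) ℝ) :=
  Submodule.map (MvPolynomial.rename (![0, 1] : Fin 2 → Fin 4)).toLinearMap
      (MvPolynomial.restrictTotalDegree (Fin 2) ℝ d) ⊔
    Submodule.map (MvPolynomial.rename (![2, 3] : Fin 2 → Fin 4)).toLinearMap
      (MvPolynomial.restrictTotalDegree (Fin 2) ℝ d)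

namespace Stmt9aux

open Polynomial TrivSqZeroExt

/-- The evaluation map onto dual numbers over `ℝ[x]`, realizing the quotient by the
transition ideal. -/
noncomputable def gmap (a : Polynomial ℝ) :
    MvPolynomial (Fin 4) ℝ →ₐ[ℝ] DualNumber (Polynomial ℝ) :=
  MvPolynomial.aeval ![-DualNumber.eps, inl Polynomial.X + inr a, inl Polynomial.X,
    DualNumber.eps]

lemma aeval_inlX (b : Polynomial ℝ) :
    Polynomial.aeval (inl Polynomial.X : DualNumber (Polynomial ℝ)) b = inl b := by
  rw [show (inl Polynomial.X : DualNumber (Polynomial ℝ))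
      = inlAlgHom ℝ (Polynomial ℝ) (Polynomial ℝ) Polynomial.X from rfl,
    Polynomial.aeval_algHom_apply, Polynomial.aeval_X_left_apply]
  rfl

noncomputable def psi (a : Polynomial ℝ) :
    DualNumber (Polynomial ℝ) →ₐ[ℝ] (MvPolynomial (Fin 4) ℝ ⧸ transIdeal a) :=
  DualNumber.lift ⟨(Polynomial.aeval (Ideal.Quotient.mk (transIdeal a) (X 2)),
      Ideal.Quotient.mk (transIdeal a) (X 3)), by
    constructor
    · rw [← map_mul, ← sq, Ideal.Quotient.eq_zero_iff_mem]
      exact Ideal.subset_span (by simp)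
    · exact fun _ => Commute.all _ _⟩

lemma psi_gmap (a : Polynomial ℝ) :
    (psi a).comp (gmap a) = Ideal.Quotient.mkₐ ℝ (transIdeal a) := by
  apply MvPolynomial.algHom_ext
  intro i
  fin_cases i
  · show psi a (gmap a (X 0)) = Ideal.Quotient.mk (transIdeal a) (X 0)
    rw [show gmap a (X 0) = -DualNumber.eps by simp [gmap]]
    rw [map_neg, psi, DualNumber.lift_apply_apply]
    simp only [DualNumber.fst_eps, DualNumber.snd_eps, map_zero, map_one, one_mul, zero_add]
    have h0 : Ideal.Quotient.mk (transIdeal a) (X 0 + X 3) = 0 :=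
      Ideal.Quotient.eq_zero_iff_mem.mpr (Ideal.subset_span (by simp))
    rw [map_add] at h0
    linear_combination -h0
  · show psi a (gmap a (X 1)) = Ideal.Quotient.mk (transIdeal a) (X 1)
    rw [show gmap a (X 1) = inl Polynomial.X + inr a by simp [gmap]]
    rw [psi, DualNumber.lift_apply_apply]
    simp only [TrivSqZeroExt.fst_add, TrivSqZeroExt.snd_add, fst_inl, snd_inl, fst_inr, snd_inr,
      add_zero, zero_add]
    rw [Polynomial.aeval_X,
      show ((Polynomial.aeval ((Ideal.Quotient.mk (transIdeal a)) (X 2))) a : _)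
        = Ideal.Quotient.mk (transIdeal a) (Polynomial.aeval (X 2 : MvPolynomial (Fin 4) ℝ) a)
      from (Polynomial.aeval_algHom_apply (Ideal.Quotient.mkₐ ℝ (transIdeal a)) _ _),
      ← map_mul, ← map_add, Ideal.Quotient.eq]
    have h : (X 2 : MvPolynomial (Fin 4) ℝ)
        + Polynomial.aeval (X 2 : MvPolynomial (Fin 4) ℝ) a * X 3 - X 1
        = -(X 1 - X 2 - X 3 * Polynomial.aeval (X 2 : MvPolynomial (Fin 4) ℝ) a) := by ring
    rw [h]
    exact neg_mem (Ideal.subset_span (by simp))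
  · show psi a (gmap a (X 2)) = Ideal.Quotient.mk (transIdeal a) (X 2)
    rw [show gmap a (X 2) = inl Polynomial.X by simp [gmap]]
    rw [psi, DualNumber.lift_apply_apply]; simp
  · show psi a (gmap a (X 3)) = Ideal.Quotient.mk (transIdeal a) (X 3)
    rw [show gmap a (X 3) = DualNumber.eps by simp [gmap]]
    rw [psi, DualNumber.lift_apply_apply]; simp

lemma mem_transIdeal_iff (a : Polynomial ℝ) (p : MvPolynomial (Fin 4) ℝ) :
    p ∈ transIdeal a ↔ gmap a p = 0 := by
  constructor
  · intro hp
    have hle : transIdeal a ≤ RingHom.ker (gmap a).toRingHom := by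
      rw [transIdeal, Ideal.span_le]
      intro q hq
      simp only [Set.mem_insert_iff, Set.mem_singleton_iff] at hq
      rcases hq with rfl | rfl | rfl | rfl
      · show gmap a (X 0 + X 3) = 0
        rw [map_add, show gmap a (X 0) = -DualNumber.eps by simp [gmap],
          show gmap a (X 3) = DualNumber.eps by simp [gmap]]
        ring
      · show gmap a (X 1 - X 2 - X 3 * Polynomial.aeval (X 2 : MvPolynomial (Fin 4) ℝ) a) = 0
        rw [map_sub, map_sub, map_mul,
          show gmap a (X 1) = inl Polynomial.X + inr a by simp [gmap],
          show gmap a (X 2) = inl Polynomial.X by simp [gmap],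
          show gmap a (X 3) = DualNumber.eps by simp [gmap],
          show gmap a (Polynomial.aeval (X 2 : MvPolynomial (Fin 4) ℝ) a) = inl a by
            rw [← Polynomial.aeval_algHom_apply]
            rw [show gmap a (X 2) = inl Polynomial.X by simp [gmap], aeval_inlX]]
        apply TrivSqZeroExt.ext <;> simp
      · show gmap a ((X 0 : MvPolynomial (Fin 4) ℝ) ^ 2) = 0
        rw [map_pow, show gmap a (X 0) = -DualNumber.eps by simp [gmap],
          sq, neg_mul_neg, DualNumber.eps_mul_eps]
      · show gmap a ((X 3 : MvPolynomial (Fin 4) ℝ) ^ 2) = 0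
        rw [map_pow, show gmap a (X 3) = DualNumber.eps by simp [gmap],
          sq, DualNumber.eps_mul_eps]
    exact hle hp
  · intro hp
    have : Ideal.Quotient.mk (transIdeal a) p = 0 := by
      have := congrArg (fun F : MvPolynomial (Fin 4) ℝ →ₐ[ℝ]
          (MvPolynomial (Fin 4) ℝ ⧸ transIdeal a) => F p) (psi_gmap a)
      simp only [AlgHom.comp_apply, Ideal.Quotient.mkₐ_eq_mk] at this
      rw [← this, hp, map_zero]
    exact Ideal.Quotient.eq_zero_iff_mem.mp this

lemma restrictScalars_transIdeal (a : Polynomial ℝ) :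
    Submodule.restrictScalars ℝ (transIdeal a) = LinearMap.ker (gmap a).toLinearMap := by
  ext p
  simpa using mem_transIdeal_iff a p

end Stmt9aux

namespace Stmt9aux
open Polynomial TrivSqZeroExt

noncomputable def Wmod (n₁ n₂ : ℕ) : Submodule ℝ (DualNumber (Polynomial ℝ)) :=
  (Polynomial.degreeLT ℝ n₁).prod (Polynomial.degreeLT ℝ n₂)

lemma mem_Wmod {n₁ n₂ : ℕ} {z : DualNumber (Polynomial ℝ)} :
    z ∈ Wmod n₁ n₂ ↔ fst z ∈ degreeLT ℝ n₁ ∧ snd z ∈ degreeLT ℝ n₂ := Iff.rfl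

noncomputable def inlL : Polynomial ℝ →ₗ[ℝ] DualNumber (Polynomial ℝ) where
  toFun := inl
  map_add' := fun x y => by apply TrivSqZeroExt.ext <;> simp
  map_smul' c p := by apply TrivSqZeroExt.ext <;> simp

noncomputable def inrL : Polynomial ℝ →ₗ[ℝ] DualNumber (Polynomial ℝ) where
  toFun := inr
  map_add' := fun x y => by apply TrivSqZeroExt.ext <;> simp
  map_smul' c p := by apply TrivSqZeroExt.ext <;> simp

lemma Xpow_mem {j n : ℕ} (h : j < n) : (Polynomial.X ^ j : Polynomial ℝ) ∈ degreeLT ℝ n := by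
  rw [Polynomial.mem_degreeLT, Polynomial.degree_X_pow]
  exact_mod_cast h

lemma Xpow_mul_mem {a : Polynomial ℝ} {k n : ℕ} (h : k + a.natDegree < n) :
    (Polynomial.X ^ k * a : Polynomial ℝ) ∈ degreeLT ℝ n := by
  rw [Polynomial.mem_degreeLT]
  apply lt_of_le_of_lt (Polynomial.degree_mul_le _ _)
  rw [Polynomial.degree_X_pow]
  calc (k : WithBot ℕ) + a.degree ≤ (k : WithBot ℕ) + (a.natDegree : WithBot ℕ) :=
        add_le_add le_rfl Polynomial.degree_le_natDegree
    _ = ((k + a.natDegree : ℕ) : WithBot ℕ) := by push_cast; rfl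
    _ < ((n : ℕ) : WithBot ℕ) := by exact_mod_cast h

lemma aeval_right_mem (da d : ℕ) (f : MvPolynomial (Fin 2) ℝ) (hf : f.totalDegree ≤ d) :
    MvPolynomial.aeval ![inl Polynomial.X, DualNumber.eps] f ∈ Wmod (d + 1) (d + da) := by
  rw [f.as_sum, map_sum]
  refine Submodule.sum_mem _ fun m hm => ?_
  have hmd : m 0 + m 1 ≤ d := by
    have h1 := MvPolynomial.le_totalDegree hm
    rw [Finsupp.sum_fintype _ _ (fun _ => rfl), Fin.sum_univ_two] at h1
    omega
  rw [MvPolynomial.aeval_monomial, Finsupp.prod_fintype _ _ (fun _ => pow_zero _),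
    Fin.prod_univ_two]
  simp only [Matrix.cons_val_zero, Matrix.cons_val_one, Matrix.head_cons]
  rcases hj : m 1 with _ | _ | j
  · have e0 : (algebraMap ℝ (DualNumber (Polynomial ℝ))) (MvPolynomial.coeff m f) *
        ((inl Polynomial.X : DualNumber (Polynomial ℝ)) ^ m 0 * DualNumber.eps ^ 0)
        = inl (MvPolynomial.coeff m f • (Polynomial.X ^ m 0 : Polynomial ℝ)) := by
      apply TrivSqZeroExt.ext <;>
        simp [fst_mul, snd_mul, fst_pow, snd_pow, algebraMap_eq_inl', smul_eq_mul,
          Polynomial.smul_eq_C_mul]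
    rw [e0]
    exact mem_Wmod.mpr ⟨Submodule.smul_mem _ _ (Xpow_mem (by omega)), by simp⟩
  · have e1 : (algebraMap ℝ (DualNumber (Polynomial ℝ))) (MvPolynomial.coeff m f) *
        ((inl Polynomial.X : DualNumber (Polynomial ℝ)) ^ m 0 * DualNumber.eps ^ 1)
        = inr (MvPolynomial.coeff m f • (Polynomial.X ^ m 0 : Polynomial ℝ)) := by
      apply TrivSqZeroExt.ext <;>
        simp [fst_mul, snd_mul, fst_pow, snd_pow, algebraMap_eq_inl', smul_eq_mul,
          Polynomial.smul_eq_C_mul]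
    rw [e1]
    exact mem_Wmod.mpr ⟨by simp, Submodule.smul_mem _ _ (Xpow_mem (by omega))⟩
  · have e2 : (algebraMap ℝ (DualNumber (Polynomial ℝ))) (MvPolynomial.coeff m f) *
        ((inl Polynomial.X : DualNumber (Polynomial ℝ)) ^ m 0 * DualNumber.eps ^ (j + 2))
        = 0 := by
      rw [pow_add, sq, DualNumber.eps_mul_eps, mul_zero, mul_zero, mul_zero]
    rw [e2]
    exact Submodule.zero_mem _

lemma aeval_left_mem (a : Polynomial ℝ) (d : ℕ) (f : MvPolynomial (Fin 2) ℝ)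
    (hf : f.totalDegree ≤ d) :
    MvPolynomial.aeval ![-DualNumber.eps, inl Polynomial.X + inr a] f
      ∈ Wmod (d + 1) (d + a.natDegree) := by
  rw [f.as_sum, map_sum]
  refine Submodule.sum_mem _ fun m hm => ?_
  have hmd : m 0 + m 1 ≤ d := by
    have h1 := MvPolynomial.le_totalDegree hm
    rw [Finsupp.sum_fintype _ _ (fun _ => rfl), Fin.sum_univ_two] at h1
    omega
  rw [MvPolynomial.aeval_monomial, Finsupp.prod_fintype _ _ (fun _ => pow_zero _),
    Fin.prod_univ_two]
  simp only [Matrix.cons_val_zero, Matrix.cons_val_one, Matrix.head_cons]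
  rcases hi : m 0 with _ | _ | i
  · have e0 : (algebraMap ℝ (DualNumber (Polynomial ℝ))) (MvPolynomial.coeff m f) *
        ((-DualNumber.eps : DualNumber (Polynomial ℝ)) ^ 0 *
          (inl Polynomial.X + inr a) ^ m 1)
        = inl (MvPolynomial.coeff m f • (Polynomial.X ^ m 1 : Polynomial ℝ)) +
          inr (MvPolynomial.coeff m f •
            (m 1 • (Polynomial.X ^ (m 1 - 1) * a : Polynomial ℝ))) := by
      apply TrivSqZeroExt.ext <;>
        simp [fst_mul, snd_mul, fst_pow, snd_pow, algebraMap_eq_inl', smul_eq_mul,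
          Polynomial.smul_eq_C_mul, mul_comm, mul_left_comm]
    rw [e0]
    refine Submodule.add_mem _
      (mem_Wmod.mpr ⟨Submodule.smul_mem _ _ (Xpow_mem (by omega)), by simp⟩)
      (mem_Wmod.mpr ⟨by simp, Submodule.smul_mem _ _ ?_⟩)
    rcases Nat.eq_zero_or_pos (m 1) with h0 | h0
    · rw [h0, zero_smul]; exact Submodule.zero_mem _
    · exact Submodule.smul_of_tower_mem _ (m 1)
        (Xpow_mul_mem (show (m 1 - 1) + a.natDegree < d + a.natDegree by omega))
  · have e1 : (algebraMap ℝ (DualNumber (Polynomial ℝ))) (MvPolynomial.coeff m f) *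
        ((-DualNumber.eps : DualNumber (Polynomial ℝ)) ^ 1 *
          (inl Polynomial.X + inr a) ^ m 1)
        = inr (-(MvPolynomial.coeff m f • (Polynomial.X ^ m 1 : Polynomial ℝ)))
        := by
      apply TrivSqZeroExt.ext <;>
        simp [fst_mul, snd_mul, fst_pow, snd_pow, algebraMap_eq_inl', smul_eq_mul,
          Polynomial.smul_eq_C_mul]
    rw [e1]
    exact mem_Wmod.mpr ⟨by simp,
      Submodule.neg_mem _ (Submodule.smul_mem _ _ (Xpow_mem (by omega)))⟩
  · have e2 : (algebraMap ℝ (DualNumber (Polynomial ℝ))) (MvPolynomial.coeff m f) *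
        ((-DualNumber.eps : DualNumber (Polynomial ℝ)) ^ (i + 2) *
          (inl Polynomial.X + inr a) ^ m 1) = 0 := by
      rw [pow_add, sq, neg_mul_neg, DualNumber.eps_mul_eps, mul_zero, zero_mul, mul_zero]
    rw [e2]
    exact Submodule.zero_mem _

end Stmt9aux

namespace Stmt9aux
open Polynomial TrivSqZeroExt

lemma gmap_rename_left (a : Polynomial ℝ) (f : MvPolynomial (Fin 2) ℝ) :
    gmap a (MvPolynomial.rename (![0, 1] : Fin 2 → Fin 4) f)
      = MvPolynomial.aeval ![-DualNumber.eps, inl Polynomial.X + inr a] f := by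
  rw [gmap, MvPolynomial.aeval_rename]
  have h : (![-DualNumber.eps, inl Polynomial.X + inr a, inl Polynomial.X, DualNumber.eps]
      ∘ (![0, 1] : Fin 2 → Fin 4)) = ![-DualNumber.eps, inl Polynomial.X + inr a] := by
    funext i; fin_cases i <;> rfl
  rw [h]

lemma gmap_rename_right (a : Polynomial ℝ) (f : MvPolynomial (Fin 2) ℝ) :
    gmap a (MvPolynomial.rename (![2, 3] : Fin 2 → Fin 4) f)
      = MvPolynomial.aeval ![inl Polynomial.X, DualNumber.eps] f := by
  rw [gmap, MvPolynomial.aeval_rename]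
  have h : (![-DualNumber.eps, inl Polynomial.X + inr a, inl Polynomial.X, DualNumber.eps]
      ∘ (![2, 3] : Fin 2 → Fin 4)) = ![inl Polynomial.X, DualNumber.eps] := by
    funext i; fin_cases i <;> rfl
  rw [h]

lemma map_Ttot_le (a : Polynomial ℝ) (d : ℕ) :
    Submodule.map (gmap a).toLinearMap (Ttot d) ≤ Wmod (d + 1) (d + a.natDegree) := by
  rw [Ttot, Submodule.map_sup, sup_le_iff]
  constructor
  · rintro z ⟨y, ⟨f, hf, rfl⟩, rfl⟩
    simp only [AlgHom.toLinearMap_apply]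
    rw [gmap_rename_left]
    exact aeval_left_mem a d f ((MvPolynomial.mem_restrictTotalDegree _ _ _).mp hf)
  · rintro z ⟨y, ⟨f, hf, rfl⟩, rfl⟩
    simp only [AlgHom.toLinearMap_apply]
    rw [gmap_rename_right]
    exact aeval_right_mem a.natDegree d f ((MvPolynomial.mem_restrictTotalDegree _ _ _).mp hf)

lemma inl_Xpow_mem (a : Polynomial ℝ) (d i : ℕ) (hi : i ≤ d) :
    inl ((Polynomial.X : Polynomial ℝ) ^ i)
      ∈ Submodule.map (gmap a).toLinearMap (Ttot d) := by
  refine ⟨MvPolynomial.rename (![2, 3] : Fin 2 → Fin 4) (X 0 ^ i), ?_, ?_⟩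
  · apply Submodule.mem_sup_right
    exact ⟨X 0 ^ i, by
      rw [SetLike.mem_coe, MvPolynomial.mem_restrictTotalDegree,
        MvPolynomial.totalDegree_X_pow]; exact hi, rfl⟩
  · rw [AlgHom.toLinearMap_apply, gmap_rename_right, map_pow, MvPolynomial.aeval_X]
    apply TrivSqZeroExt.ext <;> simp [fst_pow, snd_pow]

lemma inr_Xpow_mem (a : Polynomial ℝ) (d i : ℕ) (hi : i < d) :
    inr ((Polynomial.X : Polynomial ℝ) ^ i)
      ∈ Submodule.map (gmap a).toLinearMap (Ttot d) := by
  refine ⟨MvPolynomial.rename (![2, 3] : Fin 2 → Fin 4) (X 0 ^ i * X 1), ?_, ?_⟩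
  · apply Submodule.mem_sup_right
    refine ⟨X 0 ^ i * X 1, ?_, rfl⟩
    rw [SetLike.mem_coe, MvPolynomial.mem_restrictTotalDegree]
    refine le_trans (MvPolynomial.totalDegree_mul _ _) ?_
    rw [MvPolynomial.totalDegree_X_pow, MvPolynomial.totalDegree_X]
    omega
  · rw [AlgHom.toLinearMap_apply, gmap_rename_right, map_mul, map_pow, MvPolynomial.aeval_X,
      MvPolynomial.aeval_X]
    apply TrivSqZeroExt.ext <;> simp [fst_mul, snd_mul, fst_pow, snd_pow]

lemma inr_Xpow_mul_a_mem (a : Polynomial ℝ) (d j : ℕ) (hj1 : 1 ≤ j) (hjd : j ≤ d) :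
    inr ((Polynomial.X : Polynomial ℝ) ^ (j - 1) * a)
      ∈ Submodule.map (gmap a).toLinearMap (Ttot d) := by
  have hXj : gmap a (MvPolynomial.rename (![0, 1] : Fin 2 → Fin 4) (X 1 ^ j))
      = inl ((Polynomial.X : Polynomial ℝ) ^ j)
        + inr ((j : ℕ) • ((Polynomial.X : Polynomial ℝ) ^ (j - 1) * a)) := by
    rw [gmap_rename_left, map_pow, MvPolynomial.aeval_X]
    apply TrivSqZeroExt.ext <;>
      simp [fst_mul, snd_mul, fst_pow, snd_pow, smul_eq_mul, mul_comm, mul_left_comm]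
  have h1 : (inl ((Polynomial.X : Polynomial ℝ) ^ j)
        + inr ((j : ℕ) • ((Polynomial.X : Polynomial ℝ) ^ (j - 1) * a)) : DualNumber _)
      ∈ Submodule.map (gmap a).toLinearMap (Ttot d) := by
    rw [← hXj]
    refine ⟨_, ?_, rfl⟩
    apply Submodule.mem_sup_left
    exact ⟨X 1 ^ j, by
      rw [SetLike.mem_coe, MvPolynomial.mem_restrictTotalDegree,
        MvPolynomial.totalDegree_X_pow]; exact hjd, rfl⟩
  have h2 : inr ((j : ℕ) • ((Polynomial.X : Polynomial ℝ) ^ (j - 1) * a))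
      ∈ Submodule.map (gmap a).toLinearMap (Ttot d) := by
    have := Submodule.sub_mem _ h1 (inl_Xpow_mem a d j hjd)
    rwa [add_sub_cancel_left] at this
  have hcast : inr ((j : ℕ) • ((Polynomial.X : Polynomial ℝ) ^ (j - 1) * a))
      = (j : ℝ) • (inr ((Polynomial.X : Polynomial ℝ) ^ (j - 1) * a) : DualNumber _) := by
    apply TrivSqZeroExt.ext <;> simp [Polynomial.smul_eq_C_mul, mul_comm]
  have hj0 : (j : ℝ) ≠ 0 := Nat.cast_ne_zero.mpr (by omega)
  have : inr ((Polynomial.X : Polynomial ℝ) ^ (j - 1) * a)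
      = (j : ℝ)⁻¹ • (inr ((j : ℕ) • ((Polynomial.X : Polynomial ℝ) ^ (j - 1) * a))
        : DualNumber _) := by
    rw [hcast, smul_smul, inv_mul_cancel₀ hj0, one_smul]
  rw [this]
  exact Submodule.smul_mem _ _ h2

lemma le_map_Ttot (a : Polynomial ℝ) (d : ℕ) (hda1 : 1 ≤ a.natDegree)
    (hd : a.natDegree + 1 ≤ d) :
    Wmod (d + 1) (d + a.natDegree) ≤ Submodule.map (gmap a).toLinearMap (Ttot d) := by
  classical
  have ha : a ≠ 0 := fun h => by simp [h] at hda1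
  set M' := Submodule.map (gmap a).toLinearMap (Ttot d) with hM'
  set da := a.natDegree with hdadef
  -- all inr of polynomials of degree < d + da are in M'
  have hInr : ∀ k, k ≤ d + da → ∀ p ∈ degreeLT ℝ k, inr p ∈ M' := by
    intro k
    induction k with
    | zero =>
      intro _ p hp
      rw [Polynomial.mem_degreeLT] at hp
      have hb : p.degree = ⊥ := Nat.WithBot.lt_zero_iff.mp (by exact_mod_cast hp)
      rw [Polynomial.degree_eq_bot.mp hb]
      have h0 : (inr (0 : Polynomial ℝ) : DualNumber (Polynomial ℝ)) = 0 := by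
        apply TrivSqZeroExt.ext <;> simp
      rw [h0]
      exact Submodule.zero_mem M'
    | succ k ih =>
      intro hk p hp
      have hXk : inr ((Polynomial.X : Polynomial ℝ) ^ k) ∈ M' := by
        by_cases hkd : k < d
        · exact inr_Xpow_mem a d k hkd
        · push_neg at hkd
          set c₀ := a.leadingCoeff with hc₀def
          have hc₀ : c₀ ≠ 0 := Polynomial.leadingCoeff_ne_zero.mpr ha
          have hkda : da ≤ k := by omega
          set r := Polynomial.X ^ (k - da) * a - Polynomial.C c₀ * Polynomial.X ^ k with hrdef
          have hdeg : (Polynomial.X ^ (k - da) * a : Polynomial ℝ).degree = k := by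
            rw [Polynomial.degree_mul, Polynomial.degree_X_pow,
              Polynomial.degree_eq_natDegree ha, ← hdadef]
            exact_mod_cast congrArg Nat.cast (by omega : (k - da) + da = k)
          have hr : r.degree < (k : WithBot ℕ) := by
            rw [hrdef, ← hdeg]
            apply Polynomial.degree_sub_lt
            · rw [hdeg, Polynomial.degree_C_mul_X_pow k hc₀]
            · exact mul_ne_zero (pow_ne_zero _ Polynomial.X_ne_zero) ha
            · rw [Polynomial.leadingCoeff_mul, Polynomial.leadingCoeff_X_pow, one_mul,
                Polynomial.leadingCoeff_C_mul_X_pow]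
          have hrM : inr r ∈ M' := ih (by omega) r (Polynomial.mem_degreeLT.mpr hr)
          have haM : inr (Polynomial.X ^ (k - da) * a : Polynomial ℝ) ∈ M' := by
            have := inr_Xpow_mul_a_mem a d (k - da + 1) (by omega) (by omega)
            rwa [Nat.add_sub_cancel] at this
          have hXkeq : (Polynomial.X : Polynomial ℝ) ^ k
              = c₀⁻¹ • (Polynomial.X ^ (k - da) * a - r) := by
            rw [hrdef, sub_sub_cancel, Polynomial.smul_eq_C_mul, ← mul_assoc, ← Polynomial.C_mul,
              inv_mul_cancel₀ hc₀, Polynomial.C_1, one_mul]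
          have : inr ((Polynomial.X : Polynomial ℝ) ^ k)
              = c₀⁻¹ • (inr (Polynomial.X ^ (k - da) * a : Polynomial ℝ) - inr r
                : DualNumber _) := by
            rw [hXkeq]
            apply TrivSqZeroExt.ext <;> simp
          rw [this]
          exact Submodule.smul_mem _ _ (Submodule.sub_mem _ haM hrM)
      -- decompose p
      have hq : p - Polynomial.C (p.coeff k) * Polynomial.X ^ k ∈ degreeLT ℝ k := by
        rw [Polynomial.mem_degreeLT]
        rw [Polynomial.degree_lt_iff_coeff_zero]
        intro n hn
        rw [Polynomial.coeff_sub, Polynomial.coeff_C_mul, Polynomial.coeff_X_pow]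
        by_cases hnk : n = k
        · subst hnk; simp
        · have : p.coeff n = 0 := by
            rw [Polynomial.mem_degreeLT] at hp
            exact Polynomial.coeff_eq_zero_of_degree_lt
              (lt_of_lt_of_le hp (by exact_mod_cast by omega : ((k+1 : ℕ) : WithBot ℕ) ≤ n))
          simp [this, hnk]
      have hpeq : p = (p - Polynomial.C (p.coeff k) * Polynomial.X ^ k)
          + p.coeff k • Polynomial.X ^ k := by
        rw [Polynomial.smul_eq_C_mul]; ring
      have : inr p = inr (p - Polynomial.C (p.coeff k) * Polynomial.X ^ k)
          + p.coeff k • (inr ((Polynomial.X : Polynomial ℝ) ^ k) : DualNumber _) := by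
        rw [hpeq]
        apply TrivSqZeroExt.ext <;> simp
        exact hpeq
      rw [this]
      exact Submodule.add_mem _ (ih (by omega) _ hq) (Submodule.smul_mem _ _ hXk)
  -- all inl of polynomials of degree < d + 1 are in M'
  have hInl : ∀ p ∈ degreeLT ℝ (d + 1), inl p ∈ M' := by
    have hle : degreeLT ℝ (d + 1) ≤ Submodule.comap inlL M' := by
      rw [Polynomial.degreeLT_eq_span_X_pow, Submodule.span_le]
      intro q hq
      simp only [Finset.coe_image, Set.mem_image, Finset.mem_coe, Finset.mem_range] at hq
      obtain ⟨i, hi, rfl⟩ := hq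
      exact inl_Xpow_mem a d i (by omega)
    exact fun p hp => hle hp
  intro z hz
  rw [show z = inl (fst z) + inr (snd z) from (TrivSqZeroExt.inl_fst_add_inr_snd_eq z).symm]
  exact Submodule.add_mem _ (hInl _ (mem_Wmod.mp hz).1)
    (hInr (d + da) le_rfl _ (mem_Wmod.mp hz).2)

end Stmt9aux

namespace Stmt9aux
open Polynomial TrivSqZeroExt

noncomputable instance (n : ℕ) : Module.Finite ℝ (degreeLT ℝ n) :=
  Module.Finite.equiv (degreeLTEquiv ℝ n).symm

lemma finrank_degreeLT (n : ℕ) : Module.finrank ℝ (degreeLT ℝ n) = n := by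
  rw [LinearEquiv.finrank_eq (degreeLTEquiv ℝ n), Module.finrank_fin_fun]

noncomputable def wmodEquiv (n₁ n₂ : ℕ) :
    ↥(Wmod n₁ n₂) ≃ₗ[ℝ] ↥(degreeLT ℝ n₁) × ↥(degreeLT ℝ n₂) where
  toFun z := (⟨fst z.val, z.prop.1⟩, ⟨snd z.val, z.prop.2⟩)
  invFun w := ⟨inl w.1.val + inr w.2.val, by
    refine mem_Wmod.mpr ⟨?_, ?_⟩
    · simpa using w.1.prop
    · simpa using w.2.prop⟩
  map_add' x y := rfl
  map_smul' c x := rfl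
  left_inv z := Subtype.ext (TrivSqZeroExt.inl_fst_add_inr_snd_eq z.val)
  right_inv w := by
    ext <;> simp

lemma finrank_Wmod (n₁ n₂ : ℕ) : Module.finrank ℝ (Wmod n₁ n₂) = n₁ + n₂ := by
  rw [LinearEquiv.finrank_eq (wmodEquiv n₁ n₂), Module.finrank_prod, finrank_degreeLT,
    finrank_degreeLT]

/-- The counting equivalence for monomials in two variables of total degree at most `d`. -/
noncomputable def rtdEquiv (d : ℕ) :
    {n : Fin 2 →₀ ℕ // n ∈ {n : Fin 2 →₀ ℕ | (n.sum fun _ e => e) ≤ d}} ≃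
      (Σ i : Fin (d + 1), Fin (d + 1 - i)) where
  toFun n := ⟨⟨n.val 0, by
      have := n.prop
      rw [Set.mem_setOf_eq, Finsupp.sum_fintype _ _ (fun _ => rfl), Fin.sum_univ_two] at this
      omega⟩, ⟨n.val 1, by
      have := n.prop
      rw [Set.mem_setOf_eq, Finsupp.sum_fintype _ _ (fun _ => rfl), Fin.sum_univ_two] at this
      simp only
      omega⟩⟩
  invFun x := ⟨Finsupp.single 0 x.1.val + Finsupp.single 1 x.2.val, by
    rw [Set.mem_setOf_eq, Finsupp.sum_fintype _ _ (fun _ => rfl), Fin.sum_univ_two]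
    have h1 := x.1.prop
    have h2 := x.2.prop
    simp only [Finsupp.add_apply, Finsupp.single_apply]
    norm_num
    omega⟩
  left_inv n := by
    apply Subtype.ext
    ext i
    fin_cases i <;> simp [Finsupp.single_apply]
  right_inv x := by
    obtain ⟨⟨i, hi⟩, ⟨j, hj⟩⟩ := x
    have e0 : ((Finsupp.single 0 i + Finsupp.single 1 j : Fin 2 →₀ ℕ)) 0 = i := by
      simp [Finsupp.single_apply]
    have e1 : ((Finsupp.single 0 i + Finsupp.single 1 j : Fin 2 →₀ ℕ)) 1 = j := by
      simp [Finsupp.single_apply]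
    refine Sigma.ext (Fin.ext ?_) (Fin.heq_ext_iff ?_ |>.mpr ?_) <;> simp [e0, e1]

lemma sum_count (n : ℕ) : ∑ i ∈ Finset.range n, (n - i) = (∑ i ∈ Finset.range n, i) + n := by
  have h := Finset.sum_range_reflect (fun j => j + 1) n
  have h2 : ∑ j ∈ Finset.range n, (n - j) = ∑ j ∈ Finset.range n, (n - 1 - j + 1) := by
    apply Finset.sum_congr rfl
    intro i hi
    have := Finset.mem_range.mp hi
    omega
  rw [h2, h, Finset.sum_add_distrib, Finset.sum_const, Finset.card_range, smul_eq_mul, mul_one]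

lemma two_mul_finrank_rtd (d : ℕ) :
    2 * Module.finrank ℝ (MvPolynomial.restrictTotalDegree (Fin 2) ℝ d) = (d + 1) * (d + 2) := by
  classical
  haveI : Fintype {n : Fin 2 →₀ ℕ // n ∈ {n : Fin 2 →₀ ℕ | (n.sum fun _ e => e) ≤ d}} :=
    Fintype.ofEquiv _ (rtdEquiv d).symm
  have hb := Module.finrank_eq_card_basis
    (MvPolynomial.basisRestrictSupport ℝ {n : Fin 2 →₀ ℕ | (n.sum fun _ e => e) ≤ d})
  rw [MvPolynomial.restrictTotalDegree, hb, Fintype.card_congr (rtdEquiv d)]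
  rw [Fintype.card_sigma]
  simp only [Fintype.card_fin]
  rw [Fin.sum_univ_eq_sum_range (fun i => d + 1 - i) (d + 1), sum_count]
  have hg : (∑ i ∈ Finset.range (d + 1), i) * 2 = (d + 1) * d := by
    simpa using Finset.sum_range_id_mul_two (d + 1)
  have h1 : (d + 1) * (d + 2) = (d + 1) * d + 2 * (d + 1) := by ring
  omega

end Stmt9aux

namespace Stmt9aux
open Polynomial TrivSqZeroExt

noncomputable abbrev V1 (d : ℕ) : Submodule ℝ (MvPolynomial (Fin 4) ℝ) :=
  Submodule.map (MvPolynomial.rename (![0, 1] : Fin 2 → Fin 4)).toLinearMap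
    (MvPolynomial.restrictTotalDegree (Fin 2) ℝ d)

noncomputable abbrev V2 (d : ℕ) : Submodule ℝ (MvPolynomial (Fin 4) ℝ) :=
  Submodule.map (MvPolynomial.rename (![2, 3] : Fin 2 → Fin 4)).toLinearMap
    (MvPolynomial.restrictTotalDegree (Fin 2) ℝ d)

lemma inf_V1_V2 (d : ℕ) :
    V1 d ⊓ V2 d = Submodule.span ℝ {(1 : MvPolynomial (Fin 4) ℝ)} := by
  classical
  apply le_antisymm
  · rintro p ⟨hp1, hp2⟩
    obtain ⟨f, _, hfp⟩ := hp1
    obtain ⟨g, _, hgp⟩ := hp2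
    have hv1 : p.vars ⊆ f.vars.image ![0, 1] := by
      rw [← hfp]; exact MvPolynomial.vars_rename _ _
    have hv2 : p.vars ⊆ g.vars.image ![2, 3] := by
      rw [← hgp]; exact MvPolynomial.vars_rename _ _
    have hvars : p.vars = ∅ := by
      by_contra h
      obtain ⟨i, hi⟩ := Finset.nonempty_iff_ne_empty.mpr h
      obtain ⟨j, _, hj⟩ := Finset.mem_image.mp (hv1 hi)
      obtain ⟨j', _, hj'⟩ := Finset.mem_image.mp (hv2 hi)
      rw [← hj] at hj'
      fin_cases j <;> fin_cases j' <;> exact absurd hj' (by decide)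
    have hsupp : p.support ⊆ {0} := by
      intro m hm
      rw [Finset.mem_singleton]
      ext i
      rw [Finsupp.coe_zero, Pi.zero_apply]
      by_contra hmi
      have : i ∈ p.vars := MvPolynomial.mem_vars i |>.mpr
        ⟨m, hm, Finsupp.mem_support_iff.mpr hmi⟩
      rw [hvars] at this
      exact absurd this (Finset.notMem_empty i)
    have hp : p = MvPolynomial.C (MvPolynomial.coeff 0 p) := by
      conv_lhs => rw [p.as_sum]
      rw [Finset.sum_subset hsupp (fun m _ hms => by
        rw [MvPolynomial.notMem_support_iff.mp hms, map_zero])]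
      rw [Finset.sum_singleton, MvPolynomial.monomial_zero']
    rw [hp]
    exact Submodule.mem_span_singleton.mpr ⟨MvPolynomial.coeff 0 p, by
      rw [MvPolynomial.smul_eq_C_mul, mul_one]⟩
  · rw [Submodule.span_le, Set.singleton_subset_iff]
    constructor
    · exact ⟨1, by
        rw [SetLike.mem_coe, MvPolynomial.mem_restrictTotalDegree,
          MvPolynomial.totalDegree_one]; omega, by simp⟩
    · exact ⟨1, by
        rw [SetLike.mem_coe, MvPolynomial.mem_restrictTotalDegree,
          MvPolynomial.totalDegree_one]; omega, by simp⟩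

lemma rename_injective01 :
    Function.Injective
      ((MvPolynomial.rename (![0, 1] : Fin 2 → Fin 4)).toLinearMap :
        MvPolynomial (Fin 2) ℝ →ₗ[ℝ] MvPolynomial (Fin 4) ℝ) :=
  MvPolynomial.rename_injective _ (by decide)

lemma rename_injective23 :
    Function.Injective
      ((MvPolynomial.rename (![2, 3] : Fin 2 → Fin 4)).toLinearMap :
        MvPolynomial (Fin 2) ℝ →ₗ[ℝ] MvPolynomial (Fin 4) ℝ) :=
  MvPolynomial.rename_injective _ (by decide)

noncomputable instance (d : ℕ) : Module.Finite ℝ (V1 d) :=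
  Module.Finite.equiv (Submodule.equivMapOfInjective _ rename_injective01 _)

noncomputable instance (d : ℕ) : Module.Finite ℝ (V2 d) :=
  Module.Finite.equiv (Submodule.equivMapOfInjective _ rename_injective23 _)

lemma finrank_V1 (d : ℕ) : Module.finrank ℝ (V1 d)
    = Module.finrank ℝ (MvPolynomial.restrictTotalDegree (Fin 2) ℝ d) :=
  (LinearEquiv.finrank_eq (Submodule.equivMapOfInjective _ rename_injective01 _)).symm

lemma finrank_V2 (d : ℕ) : Module.finrank ℝ (V2 d)
    = Module.finrank ℝ (MvPolynomial.restrictTotalDegree (Fin 2) ℝ d) :=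
  (LinearEquiv.finrank_eq (Submodule.equivMapOfInjective _ rename_injective23 _)).symm

lemma Ttot_eq (d : ℕ) : Ttot d = V1 d ⊔ V2 d := rfl

lemma finrank_Ttot (d : ℕ) :
    Module.finrank ℝ (Ttot d) + 1
      = 2 * Module.finrank ℝ (MvPolynomial.restrictTotalDegree (Fin 2) ℝ d) := by
  have h := Submodule.finrank_sup_add_finrank_inf_eq (V1 d) (V2 d)
  rw [inf_V1_V2, finrank_span_singleton (one_ne_zero), finrank_V1, finrank_V2] at h
  rw [Ttot_eq, h]
  ring

lemma Ttot_le (d : ℕ) : Ttot d ≤ MvPolynomial.restrictTotalDegree (Fin 4) ℝ d := by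
  rw [Ttot_eq, sup_le_iff]
  constructor <;>
  · rintro p ⟨f, hf, rfl⟩
    have hf' : f.totalDegree ≤ d := (MvPolynomial.mem_restrictTotalDegree _ _ _).mp hf
    rw [MvPolynomial.mem_restrictTotalDegree]
    exact le_trans (MvPolynomial.totalDegree_rename_le _ _) hf'

noncomputable instance (d : ℕ) : Module.Finite ℝ (Ttot d) :=
  Submodule.finiteDimensional_of_le (Ttot_le d)

end Stmt9aux


open Stmt9aux in
/-- Two quadrilateral patches glued along `τ` with symmetric gluing data
`[a, −1]`, `d_a = deg a ≥ 1`.  For total degree `d ≥ d_a + 1`: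
`dim T_d(τ)/(T_d(τ) ∩ I¹(τ)) = 2d + d_a + 1` and
`dim (T_d(τ) ∩ I¹(τ)) = d² + d − d_a`. -/
theorem stmt9 (a : Polynomial ℝ) (da : ℕ) (hda : a.natDegree = da) (hda1 : 1 ≤ da)
    (d : ℕ) (hd : da + 1 ≤ d) :
    Module.finrank ℝ
        (↥(Ttot d) ⧸ Submodule.comap (Ttot d).subtype
          (Submodule.restrictScalars ℝ (transIdeal a))) = 2 * d + da + 1 ∧
    Module.finrank ℝ ↥(Ttot d ⊓ Submodule.restrictScalars ℝ (transIdeal a)) =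
      d ^ 2 + d - da := by
  subst hda
  set L : ↥(Ttot d) →ₗ[ℝ] DualNumber (Polynomial ℝ) :=
    (gmap a).toLinearMap ∘ₗ (Ttot d).subtype with hL
  have hker : LinearMap.ker L = Submodule.comap (Ttot d).subtype
      (Submodule.restrictScalars ℝ (transIdeal a)) := by
    rw [hL, LinearMap.ker_comp, restrictScalars_transIdeal]
  have hrange : LinearMap.range L = Wmod (d + 1) (d + a.natDegree) := by
    rw [hL, LinearMap.range_comp, Submodule.range_subtype]
    exact le_antisymm (map_Ttot_le a d) (le_map_Ttot a d hda1 hd)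
  have hQ : Module.finrank ℝ
      (↥(Ttot d) ⧸ Submodule.comap (Ttot d).subtype
        (Submodule.restrictScalars ℝ (transIdeal a))) = 2 * d + a.natDegree + 1 := by
    rw [← hker, LinearEquiv.finrank_eq (LinearMap.quotKerEquivRange L), hrange, finrank_Wmod]
    omega
  refine ⟨hQ, ?_⟩
  -- identify the intersection with the kernel submodule
  have hcomap : Submodule.comap (Ttot d).subtype (Submodule.restrictScalars ℝ (transIdeal a))
      = Submodule.comap (Ttot d).subtype
        (Ttot d ⊓ Submodule.restrictScalars ℝ (transIdeal a)) := by
    rw [Submodule.comap_inf, Submodule.comap_subtype_self, top_inf_eq]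
  have hinf : Module.finrank ℝ ↥(Ttot d ⊓ Submodule.restrictScalars ℝ (transIdeal a))
      = Module.finrank ℝ (Submodule.comap (Ttot d).subtype
        (Submodule.restrictScalars ℝ (transIdeal a))) := by
    rw [hcomap]
    exact (LinearEquiv.finrank_eq (Submodule.comapSubtypeEquivOfLe inf_le_left)).symm
  have hrn := Submodule.finrank_quotient_add_finrank
    (Submodule.comap (Ttot d).subtype (Submodule.restrictScalars ℝ (transIdeal a)))
  rw [hQ] at hrn
  have hT := finrank_Ttot d
  have h2T := two_mul_finrank_rtd d
  have hdd : (d + 1) * (d + 2) = d * d + 3 * d + 2 := by ring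
  have hsq : d ^ 2 = d * d := sq d
  rw [hinf, hsq]
  omega
end
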